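/- arXiv:1204.3549 — 3 statements merged into one kernel-verified Lean document; each statement's English description precedes it below -/
import Mathlib

section
/- The Petersen graph has chromatic index 4; in particular it is not 3-edge-colorable. -/
/-- The Petersen graph as the Kneser graph K(5,2): vertices are the
2-element subsets of a 5-element set, adjacent iff disjoint. -/
def petersenGraph : SimpleGraph {s : Finset (Fin 5) // s.card = 2} where
  Adj x y := Disjoint x.1 y.1
  symm := ⟨fun _ _ h => h.symm⟩
  loopless := ⟨fun x h => by
    have h2 := x.2
    rw [(Finset.disjoint_self_iff_empty _).mp h] at h2
    simp at h2⟩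

instance : DecidableRel petersenGraph.Adj :=
  fun x y => inferInstanceAs (Decidable (Disjoint x.1 y.1))

/-! A depth-first search over the 15 edges, backtracking on conflicts, finds no proper
3-colouring of the line graph. Since for any graph an actual colouring makes the search succeed,
its failure, evaluated by the kernel, refutes 3-edge-colourability; an explicit 4-edge-colouring
gives the upper bound. -/

namespace SimpleGraph

variable {V : Type*} (G : SimpleGraph V) [DecidableRel G.Adj] (k : ℕ)

/-- Backtracking search: does the partial colouring `placed` extend to the given list of vertices
without a conflict along an edge? -/
def colorSearch : List V → List (V × Fin k) → Bool
  | [], _ => true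
  | v :: vs, placed => (List.finRange k).any fun c =>
      (placed.all fun wd => !(G.Adj wd.1 v && wd.2 == c)) && colorSearch vs ((v, c) :: placed)

variable {G k}

theorem Coloring.colorSearch_eq_true (C : G.Coloring (Fin k)) (vs : List V)
    (placed : List (V × Fin k)) (hplaced : ∀ wd ∈ placed, C wd.1 = wd.2) :
    colorSearch G k vs placed = true := by
  induction vs generalizing placed with
  | nil => rfl
  | cons v vs ih =>
    rw [colorSearch, List.any_eq_true]
    refine ⟨C v, List.mem_finRange _, ?_⟩
    rw [Bool.and_eq_true, List.all_eq_true]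
    refine ⟨fun wd hwd => ?_, ih _ (List.forall_mem_cons.mpr ⟨rfl, hplaced⟩)⟩
    have hne : G.Adj wd.1 v → wd.2 ≠ C v := fun hadj => hplaced wd hwd ▸ C.valid hadj
    by_cases hadj : G.Adj wd.1 v <;> simp_all

theorem not_colorable_of_colorSearch_eq_false (vs : List V)
    (h : colorSearch G k vs [] = false) : ¬ G.Colorable k := fun ⟨C⟩ => by
  simp [C.colorSearch_eq_true vs [] (by simp)] at h

end SimpleGraph

instance : DecidableRel petersenGraph.lineGraph.Adj := fun _ _ =>
  decidable_of_iff _ SimpleGraph.lineGraph_adj_iff_exists.symm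

def petersenVertex (a b : Fin 5) (h : a ≠ b := by decide) :
    {s : Finset (Fin 5) // s.card = 2} :=
  ⟨{a, b}, Finset.card_pair h⟩

def petersenEdge (a b c d : Fin 5) (hab : a ≠ b := by decide) (hcd : c ≠ d := by decide)
    (h : petersenGraph.Adj (petersenVertex a b hab) (petersenVertex c d hcd) := by decide) :
    petersenGraph.edgeSet :=
  ⟨s(petersenVertex a b hab, petersenVertex c d hcd), h⟩

def petersenEdges : List petersenGraph.edgeSet :=
  [petersenEdge 0 1 2 3, petersenEdge 0 1 2 4, petersenEdge 0 1 3 4, petersenEdge 0 2 1 3,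
   petersenEdge 0 2 1 4, petersenEdge 0 2 3 4, petersenEdge 0 3 1 2, petersenEdge 0 3 1 4,
   petersenEdge 0 3 2 4, petersenEdge 0 4 1 2, petersenEdge 0 4 1 3, petersenEdge 0 4 2 3,
   petersenEdge 1 2 3 4, petersenEdge 1 3 2 4, petersenEdge 1 4 2 3]

def petersenEdgeColoring : petersenGraph.lineGraph.Coloring (Fin 4) :=
  .mk (fun e => [0, 1, 2, 0, 1, 3, 0, 2, 3, 2, 3, 1, 1, 2, 3].getD (petersenEdges.idxOf e) 0)
    fun {e f} => by revert e f; decide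

theorem petersenGraph_lineGraph_not_colorable_three : ¬ petersenGraph.lineGraph.Colorable 3 :=
  SimpleGraph.not_colorable_of_colorSearch_eq_false petersenEdges (by decide)

theorem petersen_chromatic_index :
    petersenGraph.lineGraph.chromaticNumber = 4 ∧
    ¬ petersenGraph.lineGraph.Colorable 3 :=
  ⟨SimpleGraph.chromaticNumber_eq_iff_colorable_not_colorable.mpr
      ⟨petersenEdgeColoring.colorable, petersenGraph_lineGraph_not_colorable_three⟩,
    petersenGraph_lineGraph_not_colorable_three⟩
end

section
/- Any 3-regular simple graph of girth at least 5 on exactly 10 vertices is isomorphic to the Petersen graph. -/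
/-!
Girth at least five makes the `1 + 3 + 6` vertices at distance at most two from a vertex pairwise
distinct; with ten vertices these are all of them, so any two non-adjacent vertices have a common
neighbour. This gives a pentagon `u₀ … u₄`; let `wᵢ` be the third neighbour of `uᵢ`. Short cycles
being excluded, the ten vertices `uᵢ, wᵢ` are distinct and `wᵢ` is adjacent to no `uⱼ` with `j ≠ i`,
so the common neighbour of `wᵢ` and `uᵢ₊₂` is `wᵢ₊₂`. Hence `G` contains the generalized Petersen
graph `GP(5,2)` on all its vertices; both graphs being cubic, they are equal, and `GP(5,2)` is the
Kneser graph `K(5,2)`.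
-/

open Finset

namespace SimpleGraph

variable {V : Type*} {G : SimpleGraph V}

section Girth

variable {a b c : V}

lemma not_adj_of_adj_of_adj (hg : 4 ≤ G.girth) (hab : G.Adj a b) (hbc : G.Adj b c) :
    ¬G.Adj c a := by
  intro hca
  have hcyc : (Walk.cons hab (Walk.cons hbc (Walk.cons hca Walk.nil))).IsCycle := by
    simp [Walk.cons_isCycle_iff, hab.ne, hbc.ne, hca.ne, hab.ne', hca.ne']
  have := G.girth_le_length hcyc
  simp only [Walk.length_cons, Walk.length_nil] at this
  omega

lemma subsingleton_commonNeighbors (hg : 5 ≤ G.girth) (hac : a ≠ c) :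
    (G.commonNeighbors a c).Subsingleton := by
  rintro b ⟨hab : G.Adj a b, hcb : G.Adj c b⟩ d ⟨had : G.Adj a d, hcd : G.Adj c d⟩
  by_contra hbd
  have hcyc : (Walk.cons hab <| Walk.cons hcb.symm <| Walk.cons hcd <|
      Walk.cons had.symm Walk.nil).IsCycle := by
    simp [Walk.cons_isCycle_iff, hab.ne, hcd.ne, had.ne, hab.ne', hcb.ne', had.ne', hac, hac.symm,
      hbd]
  have := G.girth_le_length hcyc
  simp only [Walk.length_cons, Walk.length_nil] at this
  omega

end Girth

lemma exists_adj_notMem [G.LocallyFinite] (v : V) {s : Finset V} (hs : #s < G.degree v) :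
    ∃ w, G.Adj v w ∧ w ∉ s := by
  rw [← card_neighborFinset_eq_degree] at hs
  obtain ⟨w, hw, hws⟩ := exists_mem_notMem_of_card_lt_card hs
  exact ⟨w, (G.mem_neighborFinset v w).1 hw, hws⟩

noncomputable def Hom.isoOfBijective {W : Type*} {H : SimpleGraph W} [H.LocallyFinite]
    [G.LocallyFinite] {k : ℕ} (f : H →g G) (hf : Function.Bijective f)
    (hH : H.IsRegularOfDegree k) (hG : G.IsRegularOfDegree k) : H ≃g G where
  toEquiv := Equiv.ofBijective f hf
  map_rel_iff' {x y} := by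
    refine ⟨fun h => ?_, f.map_rel⟩
    have hsub : (H.neighborFinset x).map ⟨f, hf.1⟩ ⊆ G.neighborFinset (f x) := by
      intro z hz
      obtain ⟨y', hy', rfl⟩ := mem_map.1 hz
      exact (G.mem_neighborFinset _ _).2 (f.map_rel ((H.mem_neighborFinset _ _).1 hy'))
    have heq := eq_of_subset_of_card_le hsub <| by
      rw [card_map, card_neighborFinset_eq_degree, card_neighborFinset_eq_degree, hH.degree_eq,
        hG.degree_eq]
    obtain ⟨y', hy', hfy⟩ := mem_map.1 (heq ▸ (G.mem_neighborFinset _ _).2 h)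
    rwa [← hf.1 hfy, ← mem_neighborFinset]

section Moore

variable [Fintype V] [DecidableEq V] [DecidableRel G.Adj] {d : ℕ}

theorem exists_adj_adj_of_not_adj (hreg : G.IsRegularOfDegree d) (hg : 5 ≤ G.girth)
    (hcard : Fintype.card V = d ^ 2 + 1) ⦃x y : V⦄ (hxy : x ≠ y) (hn : ¬G.Adj x y) :
    ∃ z, G.Adj x z ∧ G.Adj z y := by
  set S := (G.neighborFinset x).biUnion fun w => (G.neighborFinset w).erase x
  have hS : #S = d * (d - 1) := by
    rw [card_biUnion, sum_const_nat (m := d - 1), card_neighborFinset_eq_degree, hreg.degree_eq]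
    · intro w hw
      rw [card_erase_of_mem ((G.mem_neighborFinset w x).2 ((G.mem_neighborFinset x w).1 hw).symm),
        card_neighborFinset_eq_degree, hreg.degree_eq]
    · intro w hw w' hw' hne
      refine Finset.disjoint_left.2 fun z hz hz' => ?_
      simp only [coe_neighborFinset, mem_neighborSet, mem_erase, mem_neighborFinset]
        at hz hz' hw hw'
      exact hz.1 (subsingleton_commonNeighbors hg hne ⟨hz.2, hz'.2⟩ ⟨hw.symm, hw'.symm⟩)
  have hball : insert x (G.neighborFinset x ∪ S) = univ := by
    refine eq_univ_of_card _ ?_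
    rw [card_insert_of_notMem, card_union_of_disjoint, hS, card_neighborFinset_eq_degree,
      hreg.degree_eq, hcard]
    · obtain _ | d := d
      · rfl
      · rw [add_tsub_cancel_right]
        ring
    · rw [Finset.disjoint_left]
      intro z hz hzS
      simp only [S, mem_biUnion, mem_erase, mem_neighborFinset] at hz hzS
      obtain ⟨w, hxw, -, hwz⟩ := hzS
      exact not_adj_of_adj_of_adj (by omega) hxw hwz hz.symm
    · simp [S]
  have hy : y ∈ S := by
    have := mem_univ y
    rw [← hball] at this
    simpa [hxy.symm, hn] using this
  simp only [S, mem_biUnion, mem_erase, mem_neighborFinset] at hy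
  obtain ⟨w, hxw, -, hwy⟩ := hy
  exact ⟨w, hxw, hwy⟩

theorem exists_pentagon (hreg : G.IsRegularOfDegree d) (hd : 2 ≤ d) (hg : 5 ≤ G.girth)
    (hcard : Fintype.card V = d ^ 2 + 1) :
    ∃ u : ZMod 5 → V, Function.Injective u ∧ ∀ i, G.Adj (u i) (u (i + 1)) := by
  have h4 : 4 ≤ G.girth := by omega
  obtain ⟨a⟩ : Nonempty V := Fintype.card_pos_iff.1 (by omega)
  obtain ⟨b, hab, -⟩ := exists_adj_notMem (G := G) (s := ∅) a
    (by rw [card_empty, hreg.degree_eq]; omega)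
  obtain ⟨x, hax, hxb⟩ := exists_adj_notMem (G := G) (s := {b}) a
    (by rw [card_singleton, hreg.degree_eq]; omega)
  obtain ⟨y, hby, hya⟩ := exists_adj_notMem (G := G) (s := {a}) b
    (by rw [card_singleton, hreg.degree_eq]; omega)
  rw [mem_singleton] at hxb hya
  have hxy : x ≠ y := by
    rintro rfl
    exact not_adj_of_adj_of_adj h4 hab hby hax.symm
  have hnxy : ¬G.Adj x y := fun h =>
    hya (subsingleton_commonNeighbors hg hxb ⟨h, hby⟩ ⟨hax.symm, hab.symm⟩)
  obtain ⟨z, hxz, hzy⟩ := exists_adj_adj_of_not_adj hreg hg hcard hxy hnxy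
  have hza : z ≠ a := by
    rintro rfl
    exact not_adj_of_adj_of_adj h4 hab hby hzy.symm
  have hzb : z ≠ b := by
    rintro rfl
    exact not_adj_of_adj_of_adj h4 hax hxz hab.symm
  refine ⟨![a, b, y, z, x], List.nodup_ofFn.1 ?_, ?_⟩
  · simp [hab.ne, Ne.symm hya, hza.symm, hax.ne, hby.ne, hzb.symm, Ne.symm hxb, hzy.ne', hxy.symm,
      hxz.ne']
  · intro i
    fin_cases i
    exacts [hab, hby, hzy.symm, hxz.symm, hax.symm]

end Moore

def generalizedPetersenGraph (n k : ℕ) : SimpleGraph (ZMod n ⊕ ZMod n) :=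
  fromRel fun
    | .inl i, .inl j => j = i + 1
    | .inr i, .inr j => j = i + k
    | .inl i, .inr j => i = j
    | .inr _, .inl _ => False

instance (n k : ℕ) : DecidableRel (generalizedPetersenGraph n k).Adj
  | .inl _, .inl _ | .inr _, .inr _ | .inl _, .inr _ | .inr _, .inl _ =>
    inferInstanceAs (Decidable (_ ≠ _ ∧ (_ ∨ _)))

theorem isRegularOfDegree_generalizedPetersenGraph :
    (generalizedPetersenGraph 5 2).IsRegularOfDegree 3 := by
  intro v
  decide +revert

-- `ZMod 5` is `Fin 5` by definition, so these are 2-subsets of `Fin 5`.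
def generalizedPetersenToKneser : ZMod 5 ⊕ ZMod 5 → {s : Finset (Fin 5) // s.card = 2}
  | .inl i => ⟨{2 * i, 2 * i + 1}, by revert i; decide⟩
  | .inr i => ⟨{2 * i + 2, 2 * i + 4}, by revert i; decide⟩

noncomputable def generalizedPetersenGraphIsoPetersenGraph :
    generalizedPetersenGraph 5 2 ≃g petersenGraph where
  toEquiv := Equiv.ofBijective generalizedPetersenToKneser (by decide)
  map_rel_iff' := by decide

structure IsSpokedPentagon (G : SimpleGraph V) (u w : ZMod 5 → V) : Prop where
  injective : Function.Injective u
  adj_succ : ∀ i, G.Adj (u i) (u (i + 1))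
  adj_spoke : ∀ i, G.Adj (u i) (w i)
  spoke_ne_pred : ∀ i, w i ≠ u (i - 1)
  spoke_ne_succ : ∀ i, w i ≠ u (i + 1)

namespace IsSpokedPentagon

variable {u w : ZMod 5 → V} {i j : ZMod 5}

lemma adj_of_eq_add_one (hP : G.IsSpokedPentagon u w) (h : j = i + 1) : G.Adj (u i) (u j) :=
  h ▸ hP.adj_succ i

lemma eq_of_adj (hP : G.IsSpokedPentagon u w) (hg : 5 ≤ G.girth) (h : G.Adj (w i) (u j)) :
    j = i := by
  have h4 : 4 ≤ G.girth := by omega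
  have hcases : ∀ k : ZMod 5, k = 0 ∨ k = 1 ∨ k = 2 ∨ k = 3 ∨ k = 4 := by decide
  -- `j - i = ±1` closes a triangle and `j - i = ±2` a quadrilateral.
  rcases hcases (j - i) with hk | hk | hk | hk | hk <;> rw [sub_eq_iff_eq_add'] at hk <;> subst hk
  · simp
  · exact absurd h.symm (not_adj_of_adj_of_adj h4 (hP.adj_spoke i).symm (hP.adj_succ i))
  · refine absurd ?_ (hP.spoke_ne_succ i)
    refine subsingleton_commonNeighbors hg (hP.injective.ne (by grind) : u i ≠ u (i + 2))
      ⟨hP.adj_spoke i, h.symm⟩ ⟨hP.adj_succ i, (hP.adj_of_eq_add_one (by grind)).symm⟩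
  · refine absurd ?_ (hP.spoke_ne_pred i)
    refine subsingleton_commonNeighbors hg (hP.injective.ne (by grind) : u i ≠ u (i + 3))
      ⟨hP.adj_spoke i, h.symm⟩
      ⟨(hP.adj_of_eq_add_one (by grind)).symm, hP.adj_of_eq_add_one (by grind)⟩
  · exact absurd h (not_adj_of_adj_of_adj h4 (hP.adj_of_eq_add_one (by grind)) (hP.adj_spoke i))

lemma spoke_ne (hP : G.IsSpokedPentagon u w) (hg : 5 ≤ G.girth) (i j : ZMod 5) : w i ≠ u j := by
  intro h
  have h₁ : j + 1 = i := hP.eq_of_adj hg (h ▸ hP.adj_succ j)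
  have h₂ : j - 1 = i := hP.eq_of_adj hg (h ▸ (hP.adj_of_eq_add_one (by ring)).symm)
  grind

lemma injective_sumElim (hP : G.IsSpokedPentagon u w) (hg : 5 ≤ G.girth) :
    Function.Injective (Sum.elim u w) := by
  rintro (i | i) (j | j) h <;>
    simp only [Sum.elim_inl, Sum.elim_inr, Sum.inl.injEq, Sum.inr.injEq, reduceCtorEq] at h ⊢
  · exact hP.injective h
  · exact hP.spoke_ne hg j i h.symm
  · exact hP.spoke_ne hg i j h
  · exact (hP.eq_of_adj hg (h ▸ (hP.adj_spoke j).symm : G.Adj (w i) (u j))).symm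

lemma adj_add_two (hP : G.IsSpokedPentagon u w) (hg : 5 ≤ G.girth)
    (hsurj : Function.Surjective (Sum.elim u w))
    (hmoore : ∀ ⦃x y⦄, x ≠ y → ¬G.Adj x y → ∃ z, G.Adj x z ∧ G.Adj z y) (i : ZMod 5) :
    G.Adj (w i) (w (i + 2)) := by
  have hnadj : ¬G.Adj (w i) (u (i + 2)) := fun h => by
    have := hP.eq_of_adj hg h
    grind
  obtain ⟨z, hwz, hzu⟩ := hmoore (hP.spoke_ne hg i (i + 2)) hnadj
  obtain ⟨j | j, rfl⟩ := hsurj z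
  · obtain rfl : j = i := hP.eq_of_adj hg hwz
    exact absurd hzu.symm
      (not_adj_of_adj_of_adj (by omega) (hP.adj_succ j) (hP.adj_of_eq_add_one (by ring)))
  · obtain rfl : i + 2 = j := hP.eq_of_adj hg hzu
    exact hwz

def hom (hP : G.IsSpokedPentagon u w) (hinner : ∀ i, G.Adj (w i) (w (i + 2))) :
    generalizedPetersenGraph 5 2 →g G where
  toFun := Sum.elim u w
  map_rel' {x y} h := by
    rcases x with i | i <;> rcases y with j | j <;>
      simp only [generalizedPetersenGraph, fromRel_adj, ne_eq, Nat.cast_ofNat, Sum.inl.injEq,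
        Sum.inr.injEq, reduceCtorEq, not_false_eq_true, true_and, or_false, false_or] at h
    · rcases h.2 with rfl | rfl
      exacts [hP.adj_succ i, (hP.adj_succ j).symm]
    · obtain rfl := h
      exact hP.adj_spoke i
    · obtain rfl := h
      exact (hP.adj_spoke j).symm
    · rcases h.2 with rfl | rfl
      exacts [hinner i, (hinner j).symm]

end IsSpokedPentagon

theorem exists_bijective_hom_generalizedPetersenGraph [Fintype V] [DecidableEq V]
    [DecidableRel G.Adj] (hreg : G.IsRegularOfDegree 3) (hg : 5 ≤ G.girth)
    (hcard : Fintype.card V = 10) :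
    ∃ f : generalizedPetersenGraph 5 2 →g G, Function.Bijective f := by
  obtain ⟨u, hu, hsucc⟩ := exists_pentagon hreg (by norm_num) hg hcard
  choose w hw hw' using fun i => exists_adj_notMem (G := G) (u i) (s := {u (i - 1), u (i + 1)})
    (by rw [hreg.degree_eq]; exact card_le_two.trans_lt (by norm_num))
  have hP : G.IsSpokedPentagon u w :=
    ⟨hu, hsucc, hw, fun i h => hw' i (by simp [h]), fun i h => hw' i (by simp [h])⟩
  have hbij : Function.Bijective (Sum.elim u w) :=
    (Fintype.bijective_iff_injective_and_card _).2 ⟨hP.injective_sumElim hg, by simp [hcard]⟩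
  exact ⟨hP.hom (hP.adj_add_two hg hbij.2 (exists_adj_adj_of_not_adj hreg hg hcard)), hbij⟩

end SimpleGraph

theorem petersen_unique_cage {V : Type*} [Fintype V] [DecidableEq V]
    (G : SimpleGraph V) [DecidableRel G.Adj]
    (hreg : G.IsRegularOfDegree 3) (hgirth : 5 ≤ G.girth)
    (hcard : Fintype.card V = 10) :
    Nonempty (G ≃g petersenGraph) := by
  obtain ⟨f, hf⟩ := SimpleGraph.exists_bijective_hom_generalizedPetersenGraph hreg hgirth hcard
  have hiso := f.isoOfBijective hf SimpleGraph.isRegularOfDegree_generalizedPetersenGraph hreg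
  exact ⟨hiso.symm.trans SimpleGraph.generalizedPetersenGraphIsoPetersenGraph⟩
end

section
/- The Petersen graph contains no Hamiltonian cycle. -/
namespace SimpleGraph

variable {V : Type*} (G : SimpleGraph V)

def ClosablePath (s : V) : ℕ → V → List V → Prop
  | 0, u, _ => G.Adj u s
  | n + 1, u, visited => ∃ w, G.Adj u w ∧ w ∉ visited ∧ ClosablePath s n w (u :: visited)

instance ClosablePath.decidable [Fintype V] [DecidableEq V] [DecidableRel G.Adj] (s : V) :
    ∀ n u visited, Decidable (G.ClosablePath s n u visited)
  | 0, u, _ => inferInstanceAs (Decidable (G.Adj u s))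
  | n + 1, u, visited =>
    have := fun w => ClosablePath.decidable s n w (u :: visited)
    Fintype.decidableExistsFintype

variable {G}

theorem Walk.IsPath.closablePath {s u w : V} {q : G.Walk u w} (hq : q.IsPath)
    (visited : List V) (hfresh : ∀ x ∈ q.support, x ∉ visited) (hclose : G.Adj w s) :
    G.ClosablePath s q.length u visited := by
  induction q generalizing visited with
  | nil => exact hclose
  | @cons a b c hab q ih =>
    obtain ⟨hq, ha⟩ := Walk.cons_isPath_iff hab q |>.mp hq
    refine ⟨b, hab, hfresh b (by simp), ih hq _ (fun x hx => ?_) hclose⟩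
    simp only [List.mem_cons, not_or]
    exact ⟨fun hxa => ha (hxa ▸ hx), hfresh x (by simp [hx])⟩

theorem Walk.IsHamiltonianCycle.closablePath [Fintype V] [DecidableEq V] {v : V} {p : G.Walk v v}
    (hp : p.IsHamiltonianCycle) : G.ClosablePath p.snd (Fintype.card V - 1) p.snd [] := by
  rw [← hp.isHamiltonian_tail.length_eq]
  exact hp.isHamiltonian_tail.isPath.closablePath [] (by simp) (p.adj_snd hp.isCycle.not_nil)

end SimpleGraph

set_option maxRecDepth 5000 in
theorem petersenGraph_not_closablePath :
    ∀ u, ¬ petersenGraph.ClosablePath u 9 u [] := by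
  decide

theorem petersen_not_hamiltonian :
    ¬ ∃ (v : {s : Finset (Fin 5) // s.card = 2})
        (p : petersenGraph.Walk v v), p.IsHamiltonianCycle := by
  rintro ⟨v, p, hp⟩
  exact petersenGraph_not_closablePath _ hp.closablePath
end
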